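/- arXiv:1709.04895 — 4 statements merged into one kernel-verified Lean document; each statement's English description precedes it below -/
import Mathlib

section
/- Let G be a simple graph on n vertices with a designated Hamiltonian cycle C, let m ≥ 1, let K > 0, and let S be a set of K·m independent chords of G. Then at least one of the following holds: (1) P_S contains a chain of size K·m^{1/3}; (2) Q_S contains a chain of size m^{1/3}; (3) there is a subset of S of size m^{1/3} that is simultaneously an antichain in P_S and an antichain in Q_S. Moreover, in cases (2) and (3), G contains a nontrivial cycle of length at least n − n/m^{1/3}. -/
/-!  We formalize "a graph `G` on `n` vertices with a designated Hamiltonian cycle `C`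
(with a fixed cyclic orientation)" by taking the vertex set to be `ZMod n` (with `3 ≤ n`)
and the designated Hamiltonian cycle to be `0, 1, 2, ..., n-1, 0`, which is a Hamiltonian
cycle of `G` thanks to the hypothesis `∀ i : ZMod n, G.Adj i (i + 1)`.  -/

/-- The length of the path from `x` to `y` along the designated Hamiltonian cycle,
following the fixed orientation; this is `d_C(x, y)`. -/
def dC {n : ℕ} (x y : ZMod n) : ℕ := (y - x).val

/-- `CBtw x y z` formalizes `x ≺ y ≺ z`: traversing the cycle starting from `x`
(in the fixed orientation), one meets `y` (strictly after `x`) and then `z`. -/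
def CBtw {n : ℕ} (x y z : ZMod n) : Prop := 0 < dC x y ∧ dC x y < dC x z

/-- The set of vertices on the path from `a` to `b` along the cycle (following the
orientation), inclusive of both endpoints.  The two *domains* of a chord `{a, b}` are
`arc a b` and `arc b a`. -/
def arc {n : ℕ} (a b : ZMod n) : Set (ZMod n) := {v | dC a v ≤ dC a b}

/-- The edge set of the designated Hamiltonian cycle. -/
def stdEdges (n : ℕ) : Set (Sym2 (ZMod n)) := {e | ∃ i : ZMod n, e = s(i, i + 1)}

/-- `{a, b}` is a chord of `G`: an edge of `G` not belonging to the designated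
Hamiltonian cycle. -/
def IsChordPair {n : ℕ} (G : SimpleGraph (ZMod n)) (a b : ZMod n) : Prop :=
  G.Adj a b ∧ s(a, b) ∉ stdEdges n

/-- The chords `{a, b}` and `{x, y}` interlace: their endpoints are distinct and appear
in alternating order around the cycle. -/
def Interlace {n : ℕ} (a b x y : ZMod n) : Prop :=
  (CBtw a x b ∧ CBtw b y a) ∨ (CBtw a y b ∧ CBtw b x a)

/-- `G` contains a cycle, distinct from the designated Hamiltonian cycle
(i.e. a *nontrivial* cycle), of length at least `L`. -/
def HasNontrivialCycleOfLength {n : ℕ} (G : SimpleGraph (ZMod n)) (L : ℝ) : Prop :=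
  ∃ (w : ZMod n) (W : G.Walk w w), W.IsCycle ∧
    {e | e ∈ W.edges} ≠ stdEdges n ∧ L ≤ (W.length : ℝ)

/-- `S` is a set of independent chords of `G`: every element is a chord, and no two
distinct chords in `S` share an endpoint.  (Chords are recorded as ordered pairs of
endpoints.) -/
def IndepChords {n : ℕ} (G : SimpleGraph (ZMod n)) (S : Finset (ZMod n × ZMod n)) : Prop :=
  (∀ e ∈ S, IsChordPair G e.1 e.2) ∧
  (∀ e ∈ S, ∀ e' ∈ S, e ≠ e' →
    e.1 ≠ e'.1 ∧ e.1 ≠ e'.2 ∧ e.2 ≠ e'.1 ∧ e.2 ≠ e'.2)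

/-- The *interior* of the chord `{a, b}` with respect to the fixed cycle edge
`f = {f0, f0 + 1}`: the domain of the chord containing both endpoints of `f`. -/
def interiorD {n : ℕ} (f0 a b : ZMod n) : Set (ZMod n) :=
  if dC a f0 ≤ dC a b ∧ dC a (f0 + 1) ≤ dC a b then arc a b else arc b a

/-- The *exterior* of the chord `{a, b}` with respect to the fixed cycle edge
`f = {f0, f0 + 1}`: the domain of the chord other than its interior. -/
def exteriorD {n : ℕ} (f0 a b : ZMod n) : Set (ZMod n) :=
  if dC a f0 ≤ dC a b ∧ dC a (f0 + 1) ≤ dC a b then arc b a else arc a b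

/-- The position of `v` in the linear order `L` on the vertices obtained by starting at
the endpoint `f0 + 1` of the fixed cycle edge `f = {f0, f0 + 1}` and following the cycle
to its other endpoint `f0`. -/
def posL {n : ℕ} (f0 v : ZMod n) : ℕ := dC (f0 + 1) v

/-- The strict order of the poset `P_S`:  `e1 < e2` iff the interior of `e1` is
(strictly) contained in the interior of `e2`. -/
def PRel {n : ℕ} (f0 : ZMod n) (e1 e2 : ZMod n × ZMod n) : Prop :=
  interiorD f0 e1.1 e1.2 ⊂ interiorD f0 e2.1 e2.2

/-- The strict order of the poset `Q_S`:  `e1 < e2` iff both endpoints of `e1` precede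
both endpoints of `e2` in the linear order `L`. -/
def QRel {n : ℕ} (f0 : ZMod n) (e1 e2 : ZMod n × ZMod n) : Prop :=
  posL f0 e1.1 < posL f0 e2.1 ∧ posL f0 e1.1 < posL f0 e2.2 ∧
  posL f0 e1.2 < posL f0 e2.1 ∧ posL f0 e1.2 < posL f0 e2.2

/-- `A` is a chain in the poset `P_S`. -/
def IsChainP {n : ℕ} (f0 : ZMod n) (A : Finset (ZMod n × ZMod n)) : Prop :=
  ∀ e ∈ A, ∀ e' ∈ A, e ≠ e' → PRel f0 e e' ∨ PRel f0 e' e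

/-- `A` is a chain in the poset `Q_S`. -/
def IsChainQ {n : ℕ} (f0 : ZMod n) (A : Finset (ZMod n × ZMod n)) : Prop :=
  ∀ e ∈ A, ∀ e' ∈ A, e ≠ e' → QRel f0 e e' ∨ QRel f0 e' e

/-- `A` is an antichain in the poset `P_S`. -/
def IsAntichainP {n : ℕ} (f0 : ZMod n) (A : Finset (ZMod n × ZMod n)) : Prop :=
  ∀ e ∈ A, ∀ e' ∈ A, e ≠ e' → ¬ PRel f0 e e' ∧ ¬ PRel f0 e' e

/-- `A` is an antichain in the poset `Q_S`. -/
def IsAntichainQ {n : ℕ} (f0 : ZMod n) (A : Finset (ZMod n × ZMod n)) : Prop :=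
  ∀ e ∈ A, ∀ e' ∈ A, e ≠ e' → ¬ QRel f0 e e' ∧ ¬ QRel f0 e' e


/-!
Parts (1)–(3) follow from Mirsky's theorem (a finite strict order whose chains have fewer than
`h` elements is covered by `h` antichains), applied to `P_S` and then to `Q_S` on a large
antichain of `P_S`.

For the cycles, read each chord through the positions `posMin < posMax` of its endpoints in `L`.
A chord closes the complementary arc of `C` into a cycle of length `n + 1 - (posMax - posMin)`,
and the `k` chords of a `Q_S`-chain span disjoint intervals of `L`, so one of them spans at most
`n / k`. Chords incomparable in both `P_S` and `Q_S` cross, and two crossing chords cut `C` into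
four arcs: dropping two opposite arcs leaves a cycle through both chords. Sorting `k` pairwise
crossing chords by their first endpoints, the `k - 1` consecutive pairs and the outer pair give
`k` such cycles whose dropped arcs have total length `n`, so one of them has length at least
`n + 2 - n / k`.
-/

open Finset SimpleGraph

section Mirsky
variable {α : Type*} {r : α → α → Prop}

theorem exists_isAntichain_card_le_mul (S : Finset α) (f : α → ℕ) {H : ℕ}
    (hfS : ∀ a ∈ S, f a < H) (hf : ∀ a ∈ S, ∀ b ∈ S, r a b → f a < f b) :
    ∃ A ⊆ S, IsAntichain r (A : Set α) ∧ #S ≤ H * #A := by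
  classical
  rcases S.eq_empty_or_nonempty with rfl | hS
  · exact ⟨∅, subset_refl _, by simp, by simp⟩
  obtain ⟨h, -, hmax⟩ := (S.image f).exists_max_image (fun h => #{a ∈ S | f a = h}) (hS.image f)
  refine ⟨{a ∈ S | f a = h}, filter_subset _ _, fun a ha b hb _ hr => ?_, ?_⟩
  · simp only [coe_filter, Set.mem_ofPred_eq] at ha hb
    have := hf a ha.1 b hb.1 hr
    omega
  · calc #S ≤ #{a ∈ S | f a = h} * #(S.image f) := card_le_mul_card_image S _ hmax
      _ ≤ #{a ∈ S | f a = h} * H := by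
        refine Nat.mul_le_mul_left _ ((card_le_card ?_).trans (card_range H).le)
        exact image_subset_iff.2 fun a ha => mem_range.2 (hfS a ha)
      _ = H * #{a ∈ S | f a = h} := mul_comm _ _

/-- Mirsky's theorem, via the height function `a ↦ (size of the longest chain below a)`. -/
theorem exists_isChain_isAntichain_card_le_mul [IsStrictOrder α r] (S : Finset α) :
    ∃ C ⊆ S, ∃ A ⊆ S, IsChain r (C : Set α) ∧ IsAntichain r (A : Set α) ∧
      #S ≤ #C * #A := by
  classical
  set chains := S.powerset.filter fun C : Finset α => IsChain r (C : Set α)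
  obtain ⟨C, hC, hCmax⟩ := chains.exists_max_image card ⟨∅, by simp [chains]⟩
  set below : α → Finset (Finset α) := fun a =>
    chains.filter fun D : Finset α => ∀ d ∈ D, r d a
  set height : α → ℕ := fun a => (below a).sup card
  have hinsert {a : α} (ha : a ∈ S) {D : Finset α} (hD : D ∈ below a) :
      insert a D ∈ chains ∧ #(insert a D) = #D + 1 := by
    simp only [below, chains, mem_filter, mem_powerset] at hD
    refine ⟨?_, card_insert_of_notMem fun h => irrefl_of r a (hD.2 a h)⟩
    simp only [chains, mem_filter, mem_powerset, coe_insert]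
    exact ⟨insert_subset ha hD.1.1, hD.1.2.insert fun b hb _ => Or.inr (hD.2 b hb)⟩
  have hheight (a : α) : ∃ D ∈ below a, height a = #D :=
    exists_mem_eq_sup _ ⟨∅, by simp [below, chains]⟩ card
  have height_lt {a : α} (ha : a ∈ S) : height a < #C := by
    obtain ⟨D, hD, hDa⟩ := hheight a
    have := hinsert ha hD
    have := hCmax _ this.1
    omega
  have height_lt_height {a b : α} (ha : a ∈ S) (hab : r a b) : height a < height b := by
    obtain ⟨D, hD, hDa⟩ := hheight a
    have hmem : insert a D ∈ below b := by
      simp only [below, mem_filter, mem_insert, forall_eq_or_imp] at hD ⊢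
      exact ⟨(hinsert ha (by simpa [below] using hD)).1, hab,
        fun d hd => trans_of r (hD.2 d hd) hab⟩
    have : #D + 1 ≤ height b := (hinsert ha hD).2 ▸ le_sup (f := card) hmem
    omega
  obtain ⟨A, hAS, hA, hSA⟩ := exists_isAntichain_card_le_mul S height (fun a ha => height_lt ha)
    fun a ha b _ hab => height_lt_height ha hab
  exact ⟨C, mem_powerset.1 (mem_filter.1 hC).1, A, hAS, (mem_filter.1 hC).2, hA, hSA⟩

theorem exists_chain_or_chain_or_antichain {s : α → α → Prop} [IsStrictOrder α r]
    [IsStrictOrder α s] (S : Finset α) {K x : ℝ} (hS : K * x ^ 3 ≤ #S) :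
    (∃ A ⊆ S, K * x ≤ #A ∧ IsChain r (A : Set α)) ∨
      (∃ A ⊆ S, x ≤ #A ∧ IsChain s (A : Set α)) ∨
      ∃ A ⊆ S, x ≤ #A ∧ IsAntichain r (A : Set α) ∧ IsAntichain s (A : Set α) := by
  obtain ⟨C, hCS, A, hAS, hC, hA, hSCA⟩ := exists_isChain_isAntichain_card_le_mul (r := r) S
  obtain hKC | hCK := le_or_gt (K * x) #C
  · exact Or.inl ⟨C, hCS, hKC, hC⟩
  obtain ⟨C', hC'A, A', hA'A, hC', hA', hAC'A'⟩ :=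
    exists_isChain_isAntichain_card_le_mul (r := s) A
  obtain hxC' | hC'x := le_or_gt x #C'
  · exact Or.inr (Or.inl ⟨C', hC'A.trans hAS, hxC', hC'⟩)
  refine Or.inr (Or.inr ⟨A', hA'A.trans hAS, ?_, hA.subset hA'A, hA'⟩)
  have hSCA : (#S : ℝ) ≤ #C * #A := by exact_mod_cast hSCA
  have hAC'A' : (#A : ℝ) ≤ #C' * #A' := by exact_mod_cast hAC'A'
  have hKx : 0 < K * x := (Nat.cast_nonneg _).trans_lt hCK
  have hx : 0 < x := (Nat.cast_nonneg _).trans_lt hC'x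
  have hA : x * x ≤ #A := by
    refine le_of_mul_le_mul_left ?_ hKx
    nlinarith [(Nat.cast_nonneg #A : (0 : ℝ) ≤ _)]
  refine le_of_mul_le_mul_left ?_ hx
  nlinarith [(Nat.cast_nonneg #A' : (0 : ℝ) ≤ _)]

end Mirsky

theorem exists_seq_mem_strictMonoOn {α : Type*} [Nonempty α] (A : Finset α) {f : α → ℕ}
    (hf : Set.InjOn f A) :
    ∃ c : ℕ → α, (∀ i < #A, c i ∈ A) ∧ StrictMonoOn (f ∘ c) (Set.Iio #A) := by
  classical
  have hcard : #(A.image f) = #A := card_image_of_injOn hf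
  have hmem (i : Fin #A) : ∃ a ∈ A, f a = (A.image f).orderEmbOfFin hcard i :=
    mem_image.1 (orderEmbOfFin_mem _ hcard i)
  choose c hcA hfc using hmem
  refine ⟨fun i => if h : i < #A then c ⟨i, h⟩ else Classical.arbitrary α, fun i hi => ?_,
    fun i hi j hj hij => ?_⟩
  · simp only [hi, dite_true, hcA]
  · simp only [Function.comp, Set.mem_Iio.1 hi, Set.mem_Iio.1 hj, dite_true, hfc]
    exact ((A.image f).orderEmbOfFin hcard).strictMono (Fin.mk_lt_mk.2 hij)

section HamiltonianCycle
variable {n : ℕ} {G : SimpleGraph (ZMod n)} {f0 : ZMod n} {A : Finset (ZMod n × ZMod n)}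
  {e e' : ZMod n × ZMod n}

lemma dC_eq_zero_iff {x y : ZMod n} : dC x y = 0 ↔ x = y := by
  rw [dC, ZMod.val_eq_zero, sub_eq_zero, eq_comm]

lemma dC_add_natCast (x : ZMod n) {i : ℕ} (hi : i < n) : dC x (x + i) = i := by
  rw [dC, add_sub_cancel_left, ZMod.val_natCast_of_lt hi]

lemma posL_add_one_self (f0 : ZMod n) : posL f0 (f0 + 1) = 0 := dC_eq_zero_iff.mpr rfl

lemma exists_posL_eq (f0 : ZMod n) {p : ℕ} (hp : p < n) : ∃ v, posL f0 v = p :=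
  ⟨f0 + 1 + p, dC_add_natCast _ hp⟩

lemma IsChordPair.symm {a b : ZMod n} (h : IsChordPair G a b) : IsChordPair G b a :=
  ⟨h.1.symm, Sym2.eq_swap (a := a) ▸ h.2⟩

lemma IndepChords.mono {S : Finset (ZMod n × ZMod n)} (hS : IndepChords G S) (hAS : A ⊆ S) :
    IndepChords G A :=
  ⟨fun e he => hS.1 e (hAS he), fun e he e' he' => hS.2 e (hAS he) e' (hAS he')⟩

lemma HasNontrivialCycleOfLength.mono {L L' : ℝ} (h : HasNontrivialCycleOfLength G L)
    (hL : L' ≤ L) : HasNontrivialCycleOfLength G L' :=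
  let ⟨w, W, hW, hne, hlen⟩ := h
  ⟨w, W, hW, hne, hL.trans hlen⟩

lemma hasNontrivialCycleOfLength_of_isPath {u v : ZMod n} (p : G.Walk u v) (hp : p.IsPath)
    (hvu : IsChordPair G v u) (hvu' : s(v, u) ∉ p.edges) :
    HasNontrivialCycleOfLength G (p.length + 1) := by
  refine ⟨v, Walk.cons hvu.1 p, (Walk.cons_isCycle_iff p hvu.1).2 ⟨hp, hvu'⟩, fun h => ?_, ?_⟩
  · exact hvu.2 (h ▸ show s(v, u) ∈ {e | e ∈ (Walk.cons hvu.1 p).edges} by simp)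
  · simp

def posMin (f0 : ZMod n) (e : ZMod n × ZMod n) : ℕ := min (posL f0 e.1) (posL f0 e.2)

def posMax (f0 : ZMod n) (e : ZMod n × ZMod n) : ℕ := max (posL f0 e.1) (posL f0 e.2)

lemma IsChordPair.exists_posL_eq (he : IsChordPair G e.1 e.2) (f0 : ZMod n) :
    ∃ a b, IsChordPair G a b ∧ posL f0 a = posMin f0 e ∧ posL f0 b = posMax f0 e := by
  rcases le_total (posL f0 e.1) (posL f0 e.2) with h | h
  · exact ⟨e.1, e.2, he, (min_eq_left h).symm, (max_eq_right h).symm⟩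
  · exact ⟨e.2, e.1, he.symm, (min_eq_right h).symm, (max_eq_left h).symm⟩

lemma QRel_iff : QRel f0 e e' ↔ posMax f0 e < posMin f0 e' := by
  unfold QRel posMax posMin
  omega

instance (f0 : ZMod n) : IsStrictOrder _ (PRel f0) where
  irrefl _ h := h.2 h.1
  trans _ _ _ h₁ h₂ := h₁.trans h₂

instance (f0 : ZMod n) : IsStrictOrder _ (QRel f0) where
  irrefl _ h := (QRel_iff.1 h).not_ge min_le_max
  trans _ _ _ h₁ h₂ := by
    unfold QRel at *
    omega

section ArcWalk
variable (hC : ∀ i : ZMod n, G.Adj i (i + 1))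

def arcWalk (x : ZMod n) : (l : ℕ) → G.Walk x (x + l)
  | 0 => Walk.nil.copy rfl (by simp)
  | l + 1 => ((arcWalk x l).concat (hC (x + l))).copy rfl (by push_cast; ring)

lemma arcWalk_length (x : ZMod n) (l : ℕ) : (arcWalk hC x l).length = l := by
  induction l with
  | zero => simp [arcWalk]
  | succ l ih => simp [arcWalk, ih]

lemma arcWalk_support (x : ZMod n) (l : ℕ) :
    (arcWalk hC x l).support = (List.range (l + 1)).map (fun i : ℕ => x + i) := by
  induction l with
  | zero => simp [arcWalk]
  | succ l ih =>
    rw [arcWalk, Walk.support_copy, Walk.support_concat, ih, List.range_succ (n := l + 1),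
      List.map_append]
    simp [add_assoc]

lemma mem_stdEdges_of_mem_arcWalk_edges {x : ZMod n} {l : ℕ} {e : Sym2 (ZMod n)}
    (he : e ∈ (arcWalk hC x l).edges) : e ∈ stdEdges n := by
  induction l with
  | zero => simp [arcWalk] at he
  | succ l ih =>
    rw [arcWalk, Walk.edges_copy, Walk.edges_concat, List.concat_eq_append, List.mem_append,
      List.mem_singleton] at he
    exact he.elim ih fun he => ⟨_, he⟩

end ArcWalk

variable [NeZero n]

lemma dC_lt (x y : ZMod n) : dC x y < n := ZMod.val_lt _

lemma add_dC (x y : ZMod n) : x + (dC x y : ZMod n) = y := by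
  rw [dC, ZMod.natCast_zmod_val, add_sub_cancel]

lemma dC_add_dC (a x v : ZMod n) :
    dC a x + dC x v = dC a v ∨ dC a x + dC x v = dC a v + n := by
  have hsum : v - a = (x - a) + (v - x) := by ring
  rcases lt_or_ge (dC a x + dC x v) n with h | h
  · left
    unfold dC at h ⊢
    rw [hsum, ZMod.val_add_of_lt h]
  · right
    unfold dC at h ⊢
    rw [hsum]
    exact ZMod.val_add_val_of_le h

lemma dC_add_dC_swap {a b : ZMod n} (hab : a ≠ b) : dC a b + dC b a = n := by
  have hab' : dC a b ≠ 0 := fun h => hab (dC_eq_zero_iff.mp h)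
  rcases dC_add_dC a b a with h | h <;> rw [dC_eq_zero_iff.mpr rfl] at h <;> omega

lemma two_le_dC_of_notMem_stdEdges {a b : ZMod n} (hab : a ≠ b) (hstd : s(a, b) ∉ stdEdges n) :
    2 ≤ dC a b := by
  have h0 : dC a b ≠ 0 := fun h => hab (dC_eq_zero_iff.mp h)
  have h1 : dC a b ≠ 1 := fun h => hstd ⟨a, by rw [← add_dC a b, h, Nat.cast_one]⟩
  omega

lemma IsChordPair.two_le_dC {a b : ZMod n} (h : IsChordPair G a b) : 2 ≤ dC a b ∧ 2 ≤ dC b a :=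
  ⟨two_le_dC_of_notMem_stdEdges h.1.ne h.2, two_le_dC_of_notMem_stdEdges h.1.ne.symm h.symm.2⟩

lemma posL_lt (f0 v : ZMod n) : posL f0 v < n := dC_lt _ _

lemma posL_injective (f0 : ZMod n) : Function.Injective (posL f0) := fun u v h => by
  rw [← add_dC (f0 + 1) u, ← add_dC (f0 + 1) v]
  exact congrArg (fun d : ℕ => f0 + 1 + (d : ZMod n)) h

lemma posL_self (f0 : ZMod n) : posL f0 f0 = n - 1 := by
  have hlt := posL_lt f0 f0
  rcases lt_or_ge 1 n with hn | hn
  · have h1 : dC f0 (f0 + 1) = 1 := by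
      simpa [Nat.mod_eq_of_lt hn] using dC_add_natCast f0 (i := 1) hn
    have := dC_add_dC (f0 + 1) f0 (f0 + 1)
    rw [h1, dC_eq_zero_iff.mpr rfl] at this
    unfold posL
    omega
  · omega

lemma dC_eq_posL_sub_or (f0 u v : ZMod n) :
    (posL f0 u ≤ posL f0 v ∧ dC u v = posL f0 v - posL f0 u) ∨
      (posL f0 v < posL f0 u ∧ dC u v = n + posL f0 v - posL f0 u) := by
  have := dC_add_dC (f0 + 1) u v
  have := posL_lt f0 u
  have := posL_lt f0 v
  have := dC_lt u v
  unfold posL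
  omega

lemma dC_eq_posL_sub {u v : ZMod n} (h : posL f0 u ≤ posL f0 v) :
    (dC u v : ℝ) = posL f0 v - posL f0 u := by
  rcases dC_eq_posL_sub_or f0 u v with ⟨-, h'⟩ | ⟨h'', -⟩
  · rw [h', Nat.cast_sub h]
  · omega

lemma dC_eq_posL_sub_add {u v : ZMod n} (h : posL f0 v < posL f0 u) :
    (dC u v : ℝ) = n + posL f0 v - posL f0 u := by
  rcases dC_eq_posL_sub_or f0 u v with ⟨h'', -⟩ | ⟨-, h'⟩
  · omega
  · rw [h', Nat.cast_sub (by have := posL_lt f0 u; omega)]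
    push_cast
    ring

lemma cBtw_of_posL {a x b : ZMod n}
    (h : posL f0 a < posL f0 x ∧ posL f0 x < posL f0 b ∨
      posL f0 x < posL f0 b ∧ posL f0 b < posL f0 a ∨
      posL f0 b < posL f0 a ∧ posL f0 a < posL f0 x) : CBtw a x b := by
  have := dC_eq_posL_sub_or f0 a x
  have := dC_eq_posL_sub_or f0 a b
  have := posL_lt f0 a
  have := posL_lt f0 x
  have := posL_lt f0 b
  unfold CBtw
  omega

lemma disjoint_arc_of_cBtw {a b x y : ZMod n} (hx : CBtw a x b) (hy : CBtw a b y) :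
    Disjoint (arc x b) (arc y a) := by
  refine Set.disjoint_left.2 fun v hxv hyv => ?_
  simp only [arc, Set.mem_ofPred_eq] at hxv hyv
  unfold CBtw at hx hy
  have := dC_add_dC a x b
  have := dC_add_dC a x v
  have := dC_add_dC a y v
  have := dC_add_dC a y a
  have := dC_lt a v
  have := dC_lt a y
  have := dC_lt x b
  have := dC_lt x v
  have := dC_lt y v
  have := dC_lt y a
  rw [dC_eq_zero_iff.mpr rfl] at *
  omega

lemma posMin_lt_posMax (he : e.1 ≠ e.2) : posMin f0 e < posMax f0 e := by
  have := mt (@posL_injective n _ f0 e.1 e.2) he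
  unfold posMin posMax
  omega

lemma posMax_lt (f0 : ZMod n) (e : ZMod n × ZMod n) : posMax f0 e < n :=
  max_lt (posL_lt f0 e.1) (posL_lt f0 e.2)

lemma interiorD_eq (he : IsChordPair G e.1 e.2) :
    interiorD f0 e.1 e.2 = {v | posL f0 v ≤ posMin f0 e ∨ posMax f0 e ≤ posL f0 v} := by
  obtain ⟨h1, h2⟩ := he.two_le_dC
  have := dC_add_dC_swap he.1.ne
  have := posL_self f0
  have := posL_add_one_self f0
  have := dC_eq_posL_sub_or f0 e.1 e.2
  have := dC_eq_posL_sub_or f0 e.1 f0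
  have := dC_eq_posL_sub_or f0 e.1 (f0 + 1)
  have := posL_lt f0 e.1
  have := posL_lt f0 e.2
  ext v
  have := dC_eq_posL_sub_or f0 e.1 v
  have := dC_eq_posL_sub_or f0 e.2 v
  have := dC_eq_posL_sub_or f0 e.2 e.1
  have := posL_lt f0 v
  unfold interiorD posMin posMax arc
  split_ifs <;> simp only [Set.mem_ofPred_eq] <;> omega

lemma PRel_of_nested (he : IsChordPair G e.1 e.2) (he' : IsChordPair G e'.1 e'.2)
    (hmin : posMin f0 e < posMin f0 e') (hmax : posMax f0 e' < posMax f0 e) : PRel f0 e e' := by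
  unfold PRel
  rw [interiorD_eq he, interiorD_eq he']
  refine ⟨fun v hv => by simp only [Set.mem_ofPred_eq] at hv ⊢; omega, fun hsub => ?_⟩
  obtain ⟨v, hv⟩ := exists_posL_eq f0 ((posMin_lt_posMax he'.1.ne).trans (posMax_lt f0 e'))
  have hlt := posMin_lt_posMax (f0 := f0) he'.1.ne
  have := @hsub v (by simp only [Set.mem_ofPred_eq]; omega)
  simp only [Set.mem_ofPred_eq] at this
  omega

lemma sum_posMax_sub_posMin_le (hQ : IsChainQ f0 A) :
    ∑ e ∈ A, (posMax f0 e - posMin f0 e) ≤ n := by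
  classical
  have hdisj : (A : Set (ZMod n × ZMod n)).PairwiseDisjoint
      fun e => Ico (posMin f0 e) (posMax f0 e) := by
    intro e he e' he' hne
    refine disjoint_left.2 fun p hp hp' => ?_
    rw [mem_Ico] at hp hp'
    rcases hQ e he e' he' hne with h | h <;> rw [QRel_iff] at h <;> omega
  calc ∑ e ∈ A, (posMax f0 e - posMin f0 e)
      = #(A.biUnion fun e => Ico (posMin f0 e) (posMax f0 e)) := by
        rw [card_biUnion hdisj]
        simp
    _ ≤ #(range n) := card_le_card <| biUnion_subset.2 fun e _ p hp =>
        mem_range.2 ((mem_Ico.1 hp).2.trans (posMax_lt f0 e))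
    _ = n := card_range n

lemma IndepChords.posL_ne (hA : IndepChords G A) (he : e ∈ A) (he' : e' ∈ A) (hne : e ≠ e') :
    posL f0 e.1 ≠ posL f0 e'.1 ∧ posL f0 e.1 ≠ posL f0 e'.2 ∧ posL f0 e.2 ≠ posL f0 e'.1 ∧
      posL f0 e.2 ≠ posL f0 e'.2 :=
  let ⟨h₁, h₂, h₃, h₄⟩ := hA.2 e he e' he' hne
  ⟨(posL_injective f0).ne h₁, (posL_injective f0).ne h₂, (posL_injective f0).ne h₃,
    (posL_injective f0).ne h₄⟩

lemma IndepChords.injOn_posMin (hA : IndepChords G A) : Set.InjOn (posMin f0) A := by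
  intro e he e' he' h
  by_contra hne
  have := hA.posL_ne (f0 := f0) he he' hne
  unfold posMin at h
  omega

lemma IndepChords.crossing (hA : IndepChords G A) (he : e ∈ A) (he' : e' ∈ A)
    (hP : ¬ PRel f0 e e') (hQ : ¬ QRel f0 e e') (hmin : posMin f0 e < posMin f0 e') :
    posMin f0 e' < posMax f0 e ∧ posMax f0 e < posMax f0 e' := by
  have := hA.posL_ne (f0 := f0) he he' (by rintro rfl; omega)
  have := mt (PRel_of_nested (hA.1 e he) (hA.1 e' he') hmin) hP
  rw [QRel_iff] at hQ
  unfold posMin posMax at *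
  omega

section Cycles
variable (hC : ∀ i : ZMod n, G.Adj i (i + 1))

def arcPath (x y : ZMod n) : G.Walk x y := (arcWalk hC x (dC x y)).copy rfl (add_dC x y)

lemma arcPath_length (x y : ZMod n) : (arcPath hC x y).length = dC x y := by
  simp [arcPath, arcWalk_length]

lemma mem_support_arcPath {x y v : ZMod n} : v ∈ (arcPath hC x y).support ↔ v ∈ arc x y := by
  simp only [arcPath, Walk.support_copy, arcWalk_support, List.mem_map, List.mem_range, arc,
    Set.mem_ofPred_eq]
  constructor
  · rintro ⟨i, hi, rfl⟩
    rw [dC_add_natCast x (hi.trans_le (dC_lt x y).succ_le)]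
    omega
  · exact fun h => ⟨dC x v, by omega, add_dC x v⟩

lemma arcPath_isPath (x y : ZMod n) : (arcPath hC x y).IsPath := by
  refine Walk.IsPath.mk' ?_
  rw [arcPath, Walk.support_copy, arcWalk_support]
  refine List.Nodup.map_on (fun i hi j hj hij => ?_) List.nodup_range
  have hi' : i < n := (List.mem_range.mp hi).trans_le (dC_lt x y).succ_le
  have hj' : j < n := (List.mem_range.mp hj).trans_le (dC_lt x y).succ_le
  rw [← dC_add_natCast x hi', ← dC_add_natCast x hj', hij]

lemma mem_stdEdges_of_mem_arcPath_edges {x y : ZMod n} {e : Sym2 (ZMod n)}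
    (he : e ∈ (arcPath hC x y).edges) : e ∈ stdEdges n := by
  rw [arcPath, Walk.edges_copy] at he
  exact mem_stdEdges_of_mem_arcWalk_edges hC he

include hC

lemma hasNontrivialCycleOfLength_of_chord {a b : ZMod n} (hab : IsChordPair G a b) :
    HasNontrivialCycleOfLength G (dC a b + 1) := by
  have := hasNontrivialCycleOfLength_of_isPath (arcPath hC a b) (arcPath_isPath hC a b) hab.symm
    fun h => hab.symm.2 (mem_stdEdges_of_mem_arcPath_edges hC h)
  rwa [arcPath_length] at this

lemma hasNontrivialCycleOfLength_of_cBtw {a b x y : ZMod n} (hab : IsChordPair G a b)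
    (hxy : IsChordPair G x y) (hx : CBtw a x b) (hy : CBtw a b y) :
    HasNontrivialCycleOfLength G (dC x b + dC y a + 2) := by
  let p : G.Walk x y := (arcPath hC x b).append (Walk.cons hab.1.symm (arcPath hC y a).reverse)
  have hp : p.IsPath := by
    rw [Walk.isPath_def, Walk.support_append, Walk.support_cons, List.tail_cons,
      Walk.support_reverse, List.nodup_append, List.nodup_reverse]
    refine ⟨(arcPath_isPath hC x b).support_nodup, (arcPath_isPath hC y a).support_nodup,
      fun u hu v hv huv => ?_⟩
    rw [List.mem_reverse] at hv
    subst huv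
    exact Set.disjoint_left.1 (disjoint_arc_of_cBtw hx hy) ((mem_support_arcPath hC).1 hu)
      ((mem_support_arcPath hC).1 hv)
  have hyx : s(y, x) ∉ p.edges := by
    simp only [p, Walk.edges_append, Walk.edges_cons, Walk.edges_reverse, List.mem_append,
      List.mem_cons, List.mem_reverse]
    rintro (h | h | h)
    · exact hxy.symm.2 (mem_stdEdges_of_mem_arcPath_edges hC h)
    · unfold CBtw at hx hy
      rcases Sym2.eq_iff.1 h with ⟨rfl, -⟩ | ⟨-, rfl⟩ <;> omega
    · exact hxy.symm.2 (mem_stdEdges_of_mem_arcPath_edges hC h)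
  have := hasNontrivialCycleOfLength_of_isPath p hp hxy.symm hyx
  simp only [p, Walk.length_append, Walk.length_cons, Walk.length_reverse, arcPath_length] at this
  convert this using 1
  push_cast
  ring

lemma hasNontrivialCycleOfLength_of_isChordPair (he : IsChordPair G e.1 e.2) :
    HasNontrivialCycleOfLength G (n + 1 - ((posMax f0 e : ℝ) - posMin f0 e)) := by
  obtain ⟨a, b, hab, ha, hb⟩ := he.exists_posL_eq f0
  have hlt : posL f0 a < posL f0 b := ha ▸ hb ▸ posMin_lt_posMax he.1.ne
  refine (hasNontrivialCycleOfLength_of_chord hC hab.symm).mono (le_of_eq ?_)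
  rw [dC_eq_posL_sub_add hlt, ha, hb]
  ring

lemma hasNontrivialCycleOfLength_of_crossing (he : IsChordPair G e.1 e.2)
    (he' : IsChordPair G e'.1 e'.2) (h₁ : posMin f0 e < posMin f0 e')
    (h₂ : posMin f0 e' < posMax f0 e) (h₃ : posMax f0 e < posMax f0 e') :
    HasNontrivialCycleOfLength G
        (n + 2 - ((posMin f0 e' - posMin f0 e : ℝ) + (posMax f0 e' - posMax f0 e))) ∧
      HasNontrivialCycleOfLength G
        ((posMin f0 e' - posMin f0 e : ℝ) + (posMax f0 e' - posMax f0 e) + 2) := by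
  obtain ⟨a, b, hab, ha, hb⟩ := he.exists_posL_eq f0
  obtain ⟨x, y, hxy, hx, hy⟩ := he'.exists_posL_eq f0
  simp only [← ha, ← hb, ← hx, ← hy] at h₁ h₂ h₃ ⊢
  constructor
  · refine (hasNontrivialCycleOfLength_of_cBtw hC hab hxy (cBtw_of_posL (f0 := f0) (by omega))
      (cBtw_of_posL (f0 := f0) (by omega))).mono (le_of_eq ?_)
    rw [dC_eq_posL_sub h₂.le, dC_eq_posL_sub_add (h₁.trans (h₂.trans h₃))]
    ring
  · refine (hasNontrivialCycleOfLength_of_cBtw hC hxy hab.symm (cBtw_of_posL (f0 := f0) (by omega))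
      (cBtw_of_posL (f0 := f0) (by omega))).mono (le_of_eq ?_)
    rw [dC_eq_posL_sub h₃.le, dC_eq_posL_sub h₁.le]
    ring

theorem hasNontrivialCycleOfLength_of_isChainQ (hA : ∀ e ∈ A, IsChordPair G e.1 e.2)
    (hQ : IsChainQ f0 A) (hne : A.Nonempty) : HasNontrivialCycleOfLength G (n - n / #A) := by
  obtain ⟨e, he, hmin⟩ := A.exists_min_image (fun e => posMax f0 e - posMin f0 e) hne
  have hspan : #A * (posMax f0 e - posMin f0 e) ≤ n :=
    calc #A * (posMax f0 e - posMin f0 e) = ∑ _e' ∈ A, (posMax f0 e - posMin f0 e) := by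
          rw [sum_const, smul_eq_mul]
      _ ≤ ∑ e' ∈ A, (posMax f0 e' - posMin f0 e') := sum_le_sum hmin
      _ ≤ n := sum_posMax_sub_posMin_le hQ
  have hspan' : (#A : ℝ) * ((posMax f0 e : ℝ) - posMin f0 e) ≤ n := by
    rw [← Nat.cast_sub (posMin_lt_posMax (hA e he).1.ne).le]
    exact_mod_cast hspan
  have hA0 : (0 : ℝ) < #A := by exact_mod_cast hne.card_pos
  have : (posMax f0 e : ℝ) - posMin f0 e ≤ n / #A := by
    rw [le_div_iff₀ hA0]
    linarith
  refine (hasNontrivialCycleOfLength_of_isChordPair hC (f0 := f0) (hA e he)).mono ?_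
  linarith

theorem hasNontrivialCycleOfLength_of_crossing_seq {k : ℕ} (c : ℕ → ZMod n × ZMod n)
    (hchord : ∀ i < k + 2, IsChordPair G (c i).1 (c i).2)
    (hcross : ∀ i j, i < j → j < k + 2 → posMin f0 (c i) < posMin f0 (c j) ∧
      posMin f0 (c j) < posMax f0 (c i) ∧ posMax f0 (c i) < posMax f0 (c j)) :
    HasNontrivialCycleOfLength G (n - n / (k + 2)) := by
  set s : ℕ → ℝ := fun i =>
    (posMin f0 (c (i + 1)) - posMin f0 (c i) : ℝ) + (posMax f0 (c (i + 1)) - posMax f0 (c i))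
  have hsum : ∑ i ∈ range (k + 1), s i = (posMin f0 (c (k + 1)) - posMin f0 (c 0) : ℝ) +
      (posMax f0 (c (k + 1)) - posMax f0 (c 0)) := by
    simp only [s, sum_add_distrib, sum_range_sub (fun i => (posMin f0 (c i) : ℝ)),
      sum_range_sub (fun i => (posMax f0 (c i) : ℝ))]
  rcases le_or_gt (∑ i ∈ range (k + 1), s i) (∑ _i ∈ range (k + 1), (n / (k + 2) : ℝ))
    with hle | hlt
  · obtain ⟨i, hi, hsi⟩ := exists_le_of_sum_le nonempty_range_add_one hle
    have hi : i + 1 < k + 2 := by simpa using hi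
    obtain ⟨h₁, h₂, h₃⟩ := hcross i (i + 1) (lt_add_one i) hi
    refine (hasNontrivialCycleOfLength_of_crossing hC (hchord i (by omega)) (hchord (i + 1) hi)
      h₁ h₂ h₃).1.mono ?_
    linarith
  · obtain ⟨h₁, h₂, h₃⟩ := hcross 0 (k + 1) (by omega) (by omega)
    refine (hasNontrivialCycleOfLength_of_crossing hC (hchord 0 (by omega))
      (hchord (k + 1) (by omega)) h₁ h₂ h₃).2.mono ?_
    have : ∑ _i ∈ range (k + 1), (n / (k + 2) : ℝ) = n - n / (k + 2) := by
      rw [sum_const, card_range, nsmul_eq_mul]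
      field_simp
      push_cast
      ring
    linarith

theorem hasNontrivialCycleOfLength_of_isAntichain (hA : IndepChords G A)
    (hP : IsAntichainP f0 A) (hQ : IsAntichainQ f0 A) (hne : A.Nonempty) :
    HasNontrivialCycleOfLength G (n - n / #A) := by
  obtain ⟨e, he⟩ := hne
  obtain hk | ⟨k, hk⟩ : #A = 1 ∨ ∃ k, #A = k + 2 := by
    have := card_pos.2 ⟨e, he⟩
    rcases Nat.lt_or_ge #A 2 with h | h
    · exact Or.inl (by omega)
    · exact Or.inr ⟨#A - 2, by omega⟩
  · refine (hasNontrivialCycleOfLength_of_isChordPair hC (f0 := f0) (hA.1 e he)).mono ?_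
    have : (posMax f0 e : ℝ) < n := by exact_mod_cast posMax_lt f0 e
    rw [hk, Nat.cast_one, div_one, sub_self]
    linarith [(Nat.cast_nonneg (posMin f0 e) : (0 : ℝ) ≤ _)]
  obtain ⟨c, hcA, hc⟩ := exists_seq_mem_strictMonoOn A (hA.injOn_posMin (f0 := f0))
  rw [hk] at hcA hc ⊢
  push_cast
  refine hasNontrivialCycleOfLength_of_crossing_seq hC (f0 := f0) c (fun i hi => hA.1 _ (hcA i hi))
    fun i j hij hj => ?_
  have hmin : posMin f0 (c i) < posMin f0 (c j) := hc (hij.trans hj) hj hij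
  have hne : c i ≠ c j := fun h => by rw [h] at hmin; omega
  have hi := hcA i (hij.trans hj)
  exact ⟨hmin, hA.crossing hi (hcA j hj) (hP _ hi _ (hcA j hj) hne).1
    (hQ _ hi _ (hcA j hj) hne).1 hmin⟩

end Cycles

end HamiltonianCycle

theorem chain_antichain_dichotomy_general
    (n m : ℕ) (G : SimpleGraph (ZMod n)) (hn : 3 ≤ n)
    (hC : ∀ i : ZMod n, G.Adj i (i + 1)) (hm : 1 ≤ m)
    (K : ℝ) (f0 : ZMod n)
    (S : Finset (ZMod n × ZMod n)) (hS : IndepChords G S)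
    (hcard : (S.card : ℝ) = K * (m : ℝ)) :
    ((∃ A ⊆ S, K * (m : ℝ) ^ ((1 : ℝ) / 3) ≤ (A.card : ℝ) ∧ IsChainP f0 A) ∨
     (∃ A ⊆ S, (m : ℝ) ^ ((1 : ℝ) / 3) ≤ (A.card : ℝ) ∧ IsChainQ f0 A) ∨
     (∃ A ⊆ S, (m : ℝ) ^ ((1 : ℝ) / 3) ≤ (A.card : ℝ) ∧
        IsAntichainP f0 A ∧ IsAntichainQ f0 A)) ∧
    (((∃ A ⊆ S, (m : ℝ) ^ ((1 : ℝ) / 3) ≤ (A.card : ℝ) ∧ IsChainQ f0 A) ∨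
      (∃ A ⊆ S, (m : ℝ) ^ ((1 : ℝ) / 3) ≤ (A.card : ℝ) ∧
        IsAntichainP f0 A ∧ IsAntichainQ f0 A)) →
      HasNontrivialCycleOfLength G ((n : ℝ) - (n : ℝ) / (m : ℝ) ^ ((1 : ℝ) / 3))) := by
  have : NeZero n := ⟨by omega⟩
  set x := (m : ℝ) ^ ((1 : ℝ) / 3) with hx
  refine ⟨?_, ?_⟩
  · have hx3 : x ^ 3 = m := by
      rw [hx, ← Real.rpow_natCast, ← Real.rpow_mul (Nat.cast_nonneg m)]
      norm_num
    rcases exists_chain_or_chain_or_antichain (r := PRel f0) (s := QRel f0) S (K := K) (x := x)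
      (by rw [hx3, hcard]) with ⟨A, hAS, hA, hP⟩ | ⟨A, hAS, hA, hQ⟩ | ⟨A, hAS, hA, hP, hQ⟩
    · exact Or.inl ⟨A, hAS, hA, hP⟩
    · exact Or.inr (Or.inl ⟨A, hAS, hA, hQ⟩)
    · exact Or.inr (Or.inr ⟨A, hAS, hA,
        fun e he e' he' hne => ⟨hP he he' hne, hP he' he hne.symm⟩,
        fun e he e' he' hne => ⟨hQ he he' hne, hQ he' he hne.symm⟩⟩)
  · have hx1 : 1 ≤ x := Real.one_le_rpow (by exact_mod_cast hm) (by norm_num)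
    have hne {A : Finset (ZMod n × ZMod n)} (hxA : x ≤ #A) : A.Nonempty :=
      card_pos.1 (by exact_mod_cast zero_lt_one.trans_le (hx1.trans hxA))
    have hmono {A : Finset (ZMod n × ZMod n)} (hxA : x ≤ #A)
        (h : HasNontrivialCycleOfLength G (n - n / #A)) :
        HasNontrivialCycleOfLength G (n - n / x) :=
      h.mono (sub_le_sub_left (div_le_div_of_nonneg_left (Nat.cast_nonneg n) (by linarith) hxA) n)
    rintro (⟨A, hAS, hxA, hQ⟩ | ⟨A, hAS, hxA, hP, hQ⟩)
    · exact hmono hxA (hasNontrivialCycleOfLength_of_isChainQ hC (fun e he => hS.1 e (hAS he)) hQ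
        (hne hxA))
    · exact hmono hxA (hasNontrivialCycleOfLength_of_isAntichain hC (hS.mono hAS) hP hQ (hne hxA))

/-- **Claim 3.2.**  Let `G` be a graph on `n` vertices with a designated Hamiltonian
cycle, let `m ≥ 1`, `K > 0`, and let `S` be a set of `K·m` independent chords.  Then
(1) `P_S` contains a chain of size `K·m^{1/3}`, or (2) `Q_S` contains a chain of size
`m^{1/3}`, or (3) some subset of `S` of size `m^{1/3}` is an antichain in both `P_S`
and `Q_S`.  Moreover, in either of the latter two cases, `G` contains a nontrivial
cycle of length at least `n - n/m^{1/3}`. -/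
theorem chain_antichain_dichotomy
    (n m : ℕ) (G : SimpleGraph (ZMod n)) (hn : 3 ≤ n)
    (hC : ∀ i : ZMod n, G.Adj i (i + 1)) (hm : 1 ≤ m)
    (K : ℝ) (hK : 0 < K) (f0 : ZMod n)
    (S : Finset (ZMod n × ZMod n)) (hS : IndepChords G S)
    (hcard : (S.card : ℝ) = K * (m : ℝ)) :
    ((∃ A ⊆ S, K * (m : ℝ) ^ ((1 : ℝ) / 3) ≤ (A.card : ℝ) ∧ IsChainP f0 A) ∨
     (∃ A ⊆ S, (m : ℝ) ^ ((1 : ℝ) / 3) ≤ (A.card : ℝ) ∧ IsChainQ f0 A) ∨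
     (∃ A ⊆ S, (m : ℝ) ^ ((1 : ℝ) / 3) ≤ (A.card : ℝ) ∧
        IsAntichainP f0 A ∧ IsAntichainQ f0 A)) ∧
    (((∃ A ⊆ S, (m : ℝ) ^ ((1 : ℝ) / 3) ≤ (A.card : ℝ) ∧ IsChainQ f0 A) ∨
      (∃ A ⊆ S, (m : ℝ) ^ ((1 : ℝ) / 3) ≤ (A.card : ℝ) ∧
        IsAntichainP f0 A ∧ IsAntichainQ f0 A)) →
      HasNontrivialCycleOfLength G ((n : ℝ) - (n : ℝ) / (m : ℝ) ^ ((1 : ℝ) / 3))) :=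
  chain_antichain_dichotomy_general n m G hn hC hm K f0 S hS hcard
end

section
/- Let G be a simple graph on n vertices with a designated Hamiltonian cycle C, and let S be a set of independent chords of G. If A ⊆ S is simultaneously an antichain in P_S and an antichain in Q_S, then the chords in A pairwise interlace. -/
private lemma modsub_eq {n i j : ℕ} (hi : i < n) (hj : j < n) :
    (j + n - i) % n = if i ≤ j then j - i else j + n - i := by
  split
  · have h : j + n - i = (j - i) + n := by omega
    rw [h, Nat.add_mod_right, Nat.mod_eq_of_lt (by omega)]
  · exact Nat.mod_eq_of_lt (by omega)

private lemma combcore (A B X Y : ℕ) (hqab : A ≠ B) (hqxy : X ≠ Y)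
    (h11 : A ≠ X) (h12 : A ≠ Y) (h21 : B ≠ X) (h22 : B ≠ Y)
    (hn1 : ¬ (min A B < min X Y ∧ max X Y < max A B))
    (hn2 : ¬ (min X Y < min A B ∧ max A B < max X Y))
    (hq1 : ¬ (A < X ∧ A < Y ∧ B < X ∧ B < Y))
    (hq2 : ¬ (X < A ∧ X < B ∧ Y < A ∧ Y < B)) :
    (((A < X ∧ X < B) ∨ (X < B ∧ B < A) ∨ (B < A ∧ A < X)) ∧
      ((B < Y ∧ Y < A) ∨ (Y < A ∧ A < B) ∨ (A < B ∧ B < Y))) ∨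
    (((A < Y ∧ Y < B) ∨ (Y < B ∧ B < A) ∨ (B < A ∧ A < Y)) ∧
      ((B < X ∧ X < A) ∨ (X < A ∧ A < B) ∨ (A < B ∧ B < X))) := by
  rcases lt_or_gt_of_ne hqab with h1 | h1 <;>
  rcases lt_or_gt_of_ne hqxy with h2 | h2 <;>
  rcases lt_or_gt_of_ne h11 with h3 | h3 <;>
  rcases lt_or_gt_of_ne h22 with h4 | h4 <;>
  rcases lt_or_gt_of_ne h12 with h5 | h5 <;>
  rcases lt_or_gt_of_ne h21 with h6 | h6 <;>
  omega

/-- If `A ⊆ S` is simultaneously an antichain in `P_S` and an antichain in `Q_S`, then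
the chords in `A` pairwise interlace. -/
theorem antichain_in_both_posets_pairwise_interlace
    (n : ℕ) (G : SimpleGraph (ZMod n)) (hn : 3 ≤ n)
    (hC : ∀ i : ZMod n, G.Adj i (i + 1)) (f0 : ZMod n)
    (S : Finset (ZMod n × ZMod n)) (hS : IndepChords G S)
    (A : Finset (ZMod n × ZMod n)) (hAS : A ⊆ S)
    (hP : IsAntichainP f0 A) (hQ : IsAntichainQ f0 A) :
    ∀ e ∈ A, ∀ e' ∈ A, e ≠ e' → Interlace e.1 e.2 e'.1 e'.2 := by
  haveI : NeZero n := ⟨by omega⟩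
  set q : ZMod n → ℕ := fun v => (v - f0 - 1).val with hqdef
  have hqlt : ∀ v, q v < n := fun v => ZMod.val_lt _
  have val_sub : ∀ u w : ZMod n, (u - w).val = (u.val + n - w.val) % n := by
    intro u w
    by_cases h : w = 0
    · subst h
      rw [sub_zero, ZMod.val_zero, Nat.sub_zero, Nat.add_mod_right,
        Nat.mod_eq_of_lt (ZMod.val_lt u)]
    · rw [sub_eq_add_neg, ZMod.val_add, ZMod.neg_val, if_neg h]
      have := ZMod.val_lt w
      congr 1
      omega
  have hdC : ∀ x y : ZMod n, dC x y = (q y + n - q x) % n := by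
    intro x y
    have h : y - x = (y - f0 - 1) - (x - f0 - 1) := by ring
    show (y - x).val = _
    rw [h, val_sub]
  have hqinj : ∀ u v : ZMod n, u ≠ v → q u ≠ q v := by
    intro u v huv h
    apply huv
    have h2 : u - f0 - 1 = v - f0 - 1 := ZMod.val_injective n h
    have h3 := congrArg (fun z => z + f0 + 1) h2
    simpa [sub_add_cancel] using h3
  have hqsurj : ∀ k, k < n → ∃ v : ZMod n, q v = k := by
    intro k hk
    refine ⟨f0 + 1 + (k : ZMod n), ?_⟩
    show (f0 + 1 + (k : ZMod n) - f0 - 1).val = k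
    have h : f0 + 1 + (k : ZMod n) - f0 - 1 = (k : ZMod n) := by ring
    rw [h, ZMod.val_cast_of_lt hk]
  have hone : (1 : ZMod n).val = 1 := ZMod.val_one'' (by omega)
  have hqf0 : q f0 = n - 1 := by
    show (f0 - f0 - 1).val = n - 1
    have h : f0 - f0 - 1 = -1 := by ring
    have h1 : (1 : ZMod n) ≠ 0 := by
      intro h1
      rw [h1, ZMod.val_zero] at hone
      omega
    rw [h, ZMod.neg_val, if_neg h1, hone]
  have hqf1 : q (f0 + 1) = 0 := by
    show (f0 + 1 - f0 - 1).val = 0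
    have h : f0 + 1 - f0 - 1 = 0 := by ring
    rw [h, ZMod.val_zero]
  have hpos : ∀ v, posL f0 v = q v := by
    intro v
    show (v - (f0 + 1)).val = (v - f0 - 1).val
    rw [sub_add_eq_sub_sub]
  -- characterization of the interior of a chord in terms of positions
  have hint : ∀ a b : ZMod n, q a ≠ q b → dC a b ≠ 1 → dC b a ≠ 1 →
      interiorD f0 a b = {v | q v ≤ min (q a) (q b) ∨ max (q a) (q b) ≤ q v} := by
    intro a b hab h1 h2
    have hA := hqlt a; have hB := hqlt b
    have hab' : dC a b = if q a ≤ q b then q b - q a else q b + n - q a := by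
      rw [hdC]; exact modsub_eq hA hB
    have hba' : dC b a = if q b ≤ q a then q a - q b else q a + n - q b := by
      rw [hdC]; exact modsub_eq hB hA
    have haf0 : dC a f0 = n - 1 - q a := by
      rw [hdC, hqf0, modsub_eq hA (by omega), if_pos (by omega)]
    have haf1 : dC a (f0 + 1) = if q a = 0 then 0 else n - q a := by
      rw [hdC, hqf1, modsub_eq hA (by omega)]
      split_ifs <;> omega
    have havmem : ∀ v, dC a v = if q a ≤ q v then q v - q a else q v + n - q a :=
      fun v => by rw [hdC]; exact modsub_eq hA (hqlt v)
    have hbvmem : ∀ v, dC b v = if q b ≤ q v then q v - q b else q v + n - q b :=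
      fun v => by rw [hdC]; exact modsub_eq hB (hqlt v)
    rcases Nat.lt_or_ge (q a) (q b) with hord | hord
    · -- q a < q b : the if-condition in interiorD is false
      have habv : dC a b = q b - q a := by rw [hab', if_pos hord.le]
      have hc : ¬ (dC a f0 ≤ dC a b ∧ dC a (f0 + 1) ≤ dC a b) := by
        rintro ⟨hc1, hc2⟩
        rw [haf0, habv] at hc1
        rw [haf1, habv] at hc2
        have h0 : q a = 0 ∧ q b = n - 1 := by
          by_cases hz : q a = 0
          · rw [if_pos hz] at hc2; exact ⟨hz, by omega⟩
          · rw [if_neg hz] at hc2; omega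
        apply h2
        rw [hba', if_neg (by omega)]
        omega
      have hbav : dC b a = q a + n - q b := by rw [hba', if_neg (by omega)]
      unfold interiorD
      rw [if_neg hc]
      ext v
      simp only [arc, Set.mem_setOf_eq]
      rw [hbvmem v, hbav, min_eq_left hord.le, max_eq_right hord.le]
      have := hqlt v
      split_ifs <;> omega
    · -- q b < q a : the if-condition in interiorD is true
      have hord' : q b < q a := by omega
      have habv : dC a b = q b + n - q a := by rw [hab', if_neg (by omega)]
      have hc : dC a f0 ≤ dC a b ∧ dC a (f0 + 1) ≤ dC a b := by
        constructor
        · rw [haf0, habv]; omega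
        · rw [haf1, habv]
          by_cases hz : q a = 0
          · rw [if_pos hz]; omega
          · rw [if_neg hz]; omega
      unfold interiorD
      rw [if_pos hc]
      ext v
      simp only [arc, Set.mem_setOf_eq]
      rw [havmem v, habv, min_eq_right hord'.le, max_eq_left hord'.le]
      have := hqlt v
      split_ifs <;> omega
  -- nesting of intervals of positions yields the P-relation
  have nestP : ∀ a b x y : ZMod n, q a ≠ q b → q x ≠ q y →
      dC a b ≠ 1 → dC b a ≠ 1 → dC x y ≠ 1 → dC y x ≠ 1 →
      min (q a) (q b) < min (q x) (q y) → max (q x) (q y) < max (q a) (q b) →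
      interiorD f0 a b ⊂ interiorD f0 x y := by
    intro a b x y hab hxy h1 h2 h3 h4 hm hM
    rw [hint a b hab h1 h2, hint x y hxy h3 h4, Set.ssubset_def]
    constructor
    · intro v hv
      simp only [Set.mem_setOf_eq] at hv ⊢
      omega
    · intro hsup
      obtain ⟨v, hv⟩ := hqsurj (min (q x) (q y)) (by have := hqlt x; omega)
      have hvmem : v ∈ {v | q v ≤ min (q x) (q y) ∨ max (q x) (q y) ≤ q v} := by
        simp only [Set.mem_setOf_eq]; omega
      have h5 := hsup hvmem
      simp only [Set.mem_setOf_eq] at h5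
      have hxy' := hqlt x
      have hyy := hqlt y
      omega
  -- being a chord means neither orientation has cycle-distance 1
  have hdC1 : ∀ a b : ZMod n, s(a, b) ∉ stdEdges n → dC a b ≠ 1 ∧ dC b a ≠ 1 := by
    intro a b hnotin
    constructor
    · intro h
      apply hnotin
      refine ⟨a, ?_⟩
      have hval : b - a = 1 := ZMod.val_injective n (by rw [hone]; exact h)
      have hb : b = a + 1 := by rw [← hval]; ring
      rw [hb]
    · intro h
      apply hnotin
      refine ⟨b, ?_⟩
      have hval : a - b = 1 := ZMod.val_injective n (by rw [hone]; exact h)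
      have ha : a = b + 1 := by rw [← hval]; ring
      rw [ha]
      exact Sym2.eq_swap
  -- main argument
  intro e he e' he' hne
  obtain ⟨hchord, hindep⟩ := hS
  have heS := hAS he
  have he'S := hAS he'
  have hce := hchord e heS
  have hce' := hchord e' he'S
  obtain ⟨hd1, hd2, hd3, hd4⟩ := hindep e heS e' he'S hne
  have he12 : e.1 ≠ e.2 := hce.1.ne
  have he12' : e'.1 ≠ e'.2 := hce'.1.ne
  obtain ⟨hab1, hab2⟩ := hdC1 e.1 e.2 hce.2
  obtain ⟨hxy1, hxy2⟩ := hdC1 e'.1 e'.2 hce'.2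
  have hqab : q e.1 ≠ q e.2 := hqinj _ _ he12
  have hqxy : q e'.1 ≠ q e'.2 := hqinj _ _ he12'
  have hq11 : q e.1 ≠ q e'.1 := hqinj _ _ hd1
  have hq12 : q e.1 ≠ q e'.2 := hqinj _ _ hd2
  have hq21 : q e.2 ≠ q e'.1 := hqinj _ _ hd3
  have hq22 : q e.2 ≠ q e'.2 := hqinj _ _ hd4
  obtain ⟨hP1, hP2⟩ := hP e he e' he' hne
  obtain ⟨hQ1, hQ2⟩ := hQ e he e' he' hne
  have hnest1 : ¬ (min (q e.1) (q e.2) < min (q e'.1) (q e'.2) ∧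
      max (q e'.1) (q e'.2) < max (q e.1) (q e.2)) := by
    rintro ⟨hm, hM⟩
    exact hP1 (nestP _ _ _ _ hqab hqxy hab1 hab2 hxy1 hxy2 hm hM)
  have hnest2 : ¬ (min (q e'.1) (q e'.2) < min (q e.1) (q e.2) ∧
      max (q e.1) (q e.2) < max (q e'.1) (q e'.2)) := by
    rintro ⟨hm, hM⟩
    exact hP2 (nestP _ _ _ _ hqxy hqab hxy1 hxy2 hab1 hab2 hm hM)
  have hQ1' : ¬ (q e.1 < q e'.1 ∧ q e.1 < q e'.2 ∧ q e.2 < q e'.1 ∧ q e.2 < q e'.2) := by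
    intro h
    apply hQ1
    unfold QRel
    rw [hpos, hpos, hpos, hpos]
    exact h
  have hQ2' : ¬ (q e'.1 < q e.1 ∧ q e'.1 < q e.2 ∧ q e'.2 < q e.1 ∧ q e'.2 < q e.2) := by
    intro h
    apply hQ2
    unfold QRel
    rw [hpos, hpos, hpos, hpos]
    exact h
  have cbtw : ∀ u v w : ZMod n,
      ((q u < q v ∧ q v < q w) ∨ (q v < q w ∧ q w < q u) ∨ (q w < q u ∧ q u < q v)) →
      CBtw u v w := by
    intro u v w h
    have hu := hqlt u; have hv := hqlt v; have hw := hqlt w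
    unfold CBtw
    rw [hdC, hdC, modsub_eq hu hv, modsub_eq hu hw]
    split_ifs <;> omega
  have halt := combcore (q e.1) (q e.2) (q e'.1) (q e'.2)
    hqab hqxy hq11 hq12 hq21 hq22 hnest1 hnest2 hQ1' hQ2'
  unfold Interlace
  rcases halt with ⟨h1, h2⟩ | ⟨h1, h2⟩
  · exact Or.inl ⟨cbtw _ _ _ h1, cbtw _ _ _ h2⟩
  · exact Or.inr ⟨cbtw _ _ _ h1, cbtw _ _ _ h2⟩
end

section
/- Let G be a simple graph on n vertices with a designated Hamiltonian cycle C, and let A be a set of t ≥ 2 independent, pairwise interlacing chords of G. Then there exist chords uv and xy in A with u ≺ x ≺ v ≺ y such that d_C(u,x) + d_C(v,y) ≤ n/t. -/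
section auxlemmas
variable {n : ℕ}

lemma dC_lt_s6 (hn : 0 < n) (a b : ZMod n) : dC a b < n := by
  have : NeZero n := ⟨hn.ne'⟩; exact ZMod.val_lt _

lemma dC_pos (hn : 0 < n) {a b : ZMod n} (h : a ≠ b) : 0 < dC a b := by
  have : NeZero n := ⟨hn.ne'⟩
  exact ZMod.val_pos.2 (sub_ne_zero.2 (Ne.symm h))

lemma dC_self (a : ZMod n) : dC a a = 0 := by
  simp [dC]

lemma dC_inj (hn : 0 < n) {u a b : ZMod n} (h : dC u a = dC u b) : a = b := by
  have : NeZero n := ⟨hn.ne'⟩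
  have h2 : a - u = b - u := ZMod.val_injective n h
  exact sub_left_injective h2

lemma val_sub_int (hn : 0 < n) (x y : ZMod n) :
    ((x - y).val : ℤ) = (x.val : ℤ) - y.val + if x.val < y.val then (n : ℤ) else 0 := by
  have : NeZero n := ⟨hn.ne'⟩
  rw [sub_eq_add_neg, ZMod.val_add, ZMod.neg_val]
  rcases eq_or_ne y 0 with h | h
  · subst h
    simp [Nat.mod_eq_of_lt (ZMod.val_lt x)]
  · rw [if_neg h]
    have hx := ZMod.val_lt x
    have hy := ZMod.val_lt y
    have hy0 : 0 < y.val := ZMod.val_pos.2 h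
    rcases lt_or_ge x.val y.val with hc | hc
    · rw [if_pos hc, Nat.mod_eq_of_lt (by omega)]
      push_cast; omega
    · rw [if_neg (by omega)]
      have h2 : x.val + (n - y.val) = (x.val - y.val) + n := by omega
      rw [h2, Nat.add_mod_right, Nat.mod_eq_of_lt (by omega)]
      push_cast [hc]; omega

lemma dC_rel (hn : 0 < n) (u a b : ZMod n) :
    (dC a b : ℤ) = (dC u b : ℤ) - dC u a + if dC u b < dC u a then (n : ℤ) else 0 := by
  have h : b - a = (b - u) - (a - u) := by ring
  unfold dC
  rw [h, val_sub_int hn]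

lemma not_both_arcs (hn : 0 < n) {u v a : ZMod n} (h1 : CBtw u a v) (h2 : CBtw v a u) :
    False := by
  obtain ⟨h1a, h1b⟩ := h1
  obtain ⟨h2a, h2b⟩ := h2
  have e1 : (dC v a : ℤ) = (dC u a : ℤ) - dC u v + if dC u a < dC u v then (n:ℤ) else 0 :=
    dC_rel hn u v a
  have e2 : (dC v u : ℤ) = (dC u u : ℤ) - dC u v + if dC u u < dC u v then (n:ℤ) else 0 :=
    dC_rel hn u v u
  rw [dC_self] at e2
  rw [if_pos h1b] at e1
  rw [if_pos (by omega : (0:ℕ) < dC u v)] at e2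
  omega

noncomputable def gapP {n : ℕ} (P : Finset (ZMod n)) (p : ZMod n) : ℕ :=
  sInf (dC p '' (P.erase p : Set (ZMod n)))

noncomputable def succP {n : ℕ} (P : Finset (ZMod n)) (p : ZMod n) : ZMod n :=
  p + (gapP P p : ZMod n)

lemma gapP_le {P : Finset (ZMod n)} {p q : ZMod n} (hq : q ∈ P.erase p) :
    gapP P p ≤ dC p q :=
  Nat.sInf_le ⟨q, by simpa using (And.intro (Finset.mem_of_mem_erase hq)
    (Finset.ne_of_mem_erase hq)), rfl⟩

lemma gapP_attained {P : Finset (ZMod n)} {p : ZMod n} (h : (P.erase p).Nonempty) :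
    ∃ q ∈ P.erase p, gapP P p = dC p q := by
  have hne : (dC p '' (P.erase p : Set (ZMod n))).Nonempty := by
    obtain ⟨q, hq⟩ := h
    exact ⟨dC p q, q, by simpa using (And.intro (Finset.mem_of_mem_erase hq)
      (Finset.ne_of_mem_erase hq)), rfl⟩
  obtain ⟨q, hq, hq2⟩ := Nat.sInf_mem hne
  have hq' : q ∈ P.erase p := by
    simp only [Set.mem_image, Finset.coe_erase, Set.mem_diff, Finset.mem_coe] at hq
    exact Finset.mem_erase.2 ⟨by simpa using hq.2, hq.1⟩
  exact ⟨q, hq', hq2.symm⟩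

lemma succP_eq (hn : 0 < n) {P : Finset (ZMod n)} {p q : ZMod n} (hq : q ∈ P.erase p)
    (h : gapP P p = dC p q) : succP P p = q := by
  have : NeZero n := ⟨hn.ne'⟩
  rw [succP, h, dC, ZMod.natCast_zmod_val]
  ring

lemma succP_mem (hn : 0 < n) {P : Finset (ZMod n)} {p : ZMod n}
    (h : (P.erase p).Nonempty) : succP P p ∈ P.erase p := by
  obtain ⟨q, hq, hq2⟩ := gapP_attained h
  rw [succP_eq hn hq hq2]; exact hq

lemma dC_succP (hn : 0 < n) {P : Finset (ZMod n)} {p : ZMod n}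
    (h : (P.erase p).Nonempty) : dC p (succP P p) = gapP P p := by
  obtain ⟨q, hq, hq2⟩ := gapP_attained h
  rw [succP_eq hn hq hq2, hq2]

lemma gapP_pos (hn : 0 < n) {P : Finset (ZMod n)} {p : ZMod n}
    (h : (P.erase p).Nonempty) : 0 < gapP P p := by
  obtain ⟨q, hq, hq2⟩ := gapP_attained h
  rw [hq2]
  exact dC_pos hn (Finset.ne_of_mem_erase hq).symm

lemma gapP_lt (hn : 0 < n) {P : Finset (ZMod n)} {p : ZMod n}
    (h : (P.erase p).Nonempty) : gapP P p < n := by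
  obtain ⟨q, hq, hq2⟩ := gapP_attained h
  rw [hq2]; exact dC_lt_s6 hn _ _

lemma succP_injOn (hn : 0 < n) {P : Finset (ZMod n)} (hP : 2 ≤ P.card) :
    ∀ p₁ ∈ P, ∀ p₂ ∈ P, succP P p₁ = succP P p₂ → p₁ = p₂ := by
  have : NeZero n := ⟨hn.ne'⟩
  have hne : ∀ p : ZMod n, p ∈ P → (P.erase p).Nonempty := by
    intro p hp
    rw [← Finset.card_pos, Finset.card_erase_of_mem hp]; omega
  have key : ∀ p₁ ∈ P, ∀ p₂ ∈ P, succP P p₁ = succP P p₂ →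
      gapP P p₂ < gapP P p₁ → False := by
    intro p₁ h₁ p₂ h₂ hs hlt
    have hg1 := gapP_lt hn (hne p₁ h₁)
    have hg2pos := gapP_pos hn (hne p₂ h₂)
    have hp12 : p₁ ≠ p₂ := by
      intro h; rw [h] at hlt; exact lt_irrefl _ hlt
    have hd : p₂ - p₁ = ((gapP P p₁ - gapP P p₂ : ℕ) : ZMod n) := by
      have h2 : p₁ + (gapP P p₁ : ZMod n) = p₂ + (gapP P p₂ : ZMod n) := hs
      push_cast [Nat.cast_sub hlt.le]
      linear_combination -h2
    have hdval : dC p₁ p₂ = gapP P p₁ - gapP P p₂ := by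
      rw [dC, hd, ZMod.val_cast_of_lt (by omega)]
    have hmem : p₂ ∈ P.erase p₁ := Finset.mem_erase.2 ⟨hp12.symm, h₂⟩
    have := gapP_le hmem
    omega
  intro p₁ h₁ p₂ h₂ hs
  rcases lt_trichotomy (gapP P p₁) (gapP P p₂) with h | h | h
  · exact absurd (key p₂ h₂ p₁ h₁ hs.symm h) (fun f => f)
  · have h2 : p₁ + (gapP P p₁ : ZMod n) = p₂ + (gapP P p₂ : ZMod n) := hs
    rw [h] at h2
    exact add_right_cancel h2
  · exact absurd (key p₁ h₁ p₂ h₂ hs h) (fun f => f)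

lemma sum_gapP (hn : 0 < n) {P : Finset (ZMod n)} (hP : 2 ≤ P.card) :
    ∑ p ∈ P, gapP P p = n := by
  have : NeZero n := ⟨hn.ne'⟩
  have hne : ∀ p ∈ P, (P.erase p).Nonempty := by
    intro p hp
    rw [← Finset.card_pos, Finset.card_erase_of_mem hp]; omega
  have hPne : P.Nonempty := Finset.card_pos.1 (by omega)
  have hvalinj : ∀ a ∈ P, ∀ b ∈ P, ZMod.val a = ZMod.val b → a = b := by
    intro a _ b _ h; exact ZMod.val_injective n h
  obtain ⟨M, hM, hMmax⟩ := Finset.exists_max_image P ZMod.val hPne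
  have hpt : ∀ p ∈ P, (gapP P p : ℤ) =
      ((succP P p).val : ℤ) - p.val + if (succP P p).val < p.val then (n : ℤ) else 0 := by
    intro p hp
    rw [← dC_succP hn (hne p hp)]
    exact val_sub_int hn _ _
  have hfilter : P.filter (fun p => (succP P p).val < p.val) = {M} := by
    apply Finset.ext
    intro p
    simp only [Finset.mem_filter, Finset.mem_singleton]
    constructor
    · rintro ⟨hp, hw⟩
      by_contra hpM
      have hlt : p.val < M.val := by
        have := hMmax p hp
        rcases lt_or_eq_of_le this with h | h
        · exact h
        · exact absurd (hvalinj p hp M hM h) hpM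
      have hMe : M ∈ P.erase p := Finset.mem_erase.2 ⟨fun h => hpM h.symm, hM⟩
      have h1 : gapP P p ≤ dC p M := gapP_le hMe
      have h2 : ((dC p M : ℕ) : ℤ) = (M.val : ℤ) - p.val + if M.val < p.val then (n:ℤ) else 0 :=
        val_sub_int hn M p
      rw [if_neg (by omega)] at h2
      have h3 := hpt p hp
      rw [if_pos hw] at h3
      have h4 := ZMod.val_lt M
      have h5 : (0:ℤ) ≤ ((succP P p).val : ℤ) := Int.natCast_nonneg _
      omega
    · intro h
      subst h
      refine ⟨hM, ?_⟩
      have hs := succP_mem hn (hne p hM)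
      have hsP : succP P p ∈ P := Finset.mem_of_mem_erase hs
      have hsne : succP P p ≠ p := Finset.ne_of_mem_erase hs
      have hle := hMmax _ hsP
      rcases lt_or_eq_of_le hle with h | h
      · exact h
      · exact absurd (hvalinj _ hsP _ hM h) hsne
  have himg : P.image (succP P) = P := by
    apply Finset.eq_of_subset_of_card_le
    · intro q hq
      obtain ⟨p, hp, rfl⟩ := Finset.mem_image.1 hq
      exact Finset.mem_of_mem_erase (succP_mem hn (hne p hp))
    · rw [Finset.card_image_of_injOn (fun a ha b hb => succP_injOn hn hP a ha b hb)]
  have hsumsucc : ∑ p ∈ P, ((succP P p).val : ℤ) = ∑ p ∈ P, (p.val : ℤ) := by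
    have h := Finset.sum_image (s := P) (g := succP P) (f := fun q : ZMod n => (q.val : ℤ))
      (fun a ha b hb => succP_injOn hn hP a ha b hb)
    rw [himg] at h
    exact h.symm
  have htot : (∑ p ∈ P, (gapP P p : ℤ)) = n := by
    rw [Finset.sum_congr rfl hpt, Finset.sum_add_distrib, Finset.sum_sub_distrib,
      hsumsucc, Finset.sum_ite, Finset.sum_const_zero, Finset.sum_const, hfilter]
    simp
  have hfin : ((∑ p ∈ P, gapP P p : ℕ) : ℤ) = (n : ℤ) := by push_cast; exact htot
  exact_mod_cast hfin

lemma interlace_swap1 {a b c d : ZMod n} (h : Interlace a b c d) : Interlace b a c d := by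
  unfold Interlace at *; tauto

lemma interlace_swap2 {a b c d : ZMod n} (h : Interlace a b c d) : Interlace a b d c := by
  unfold Interlace at *; tauto

end auxlemmas

/-- Given a set `A` of `t ≥ 2` independent, pairwise interlacing chords, there exist
chords `uv` and `xy` in `A` with `u ≺ x ≺ v ≺ y` such that
`d_C(u,x) + d_C(v,y) ≤ n/t`. -/
theorem close_interlacing_pair_of_pairwise_interlacing
    (n : ℕ) (G : SimpleGraph (ZMod n)) (hn : 3 ≤ n)
    (hC : ∀ i : ZMod n, G.Adj i (i + 1))
    (t : ℕ) (ht : 2 ≤ t)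
    (A : Finset (ZMod n × ZMod n)) (hA : IndepChords G A) (hcard : A.card = t)
    (hinter : ∀ e ∈ A, ∀ e' ∈ A, e ≠ e' → Interlace e.1 e.2 e'.1 e'.2) :
    ∃ e1 ∈ A, ∃ e2 ∈ A, e1 ≠ e2 ∧
      ∃ u v x y : ZMod n, s(u, v) = s(e1.1, e1.2) ∧ s(x, y) = s(e2.1, e2.2) ∧
        CBtw u x v ∧ CBtw v y u ∧
        ((dC u x + dC v y : ℕ) : ℝ) ≤ (n : ℝ) / (t : ℝ) := by
  classical
  have hn0 : 0 < n := by omega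
  obtain ⟨hchord, hindep⟩ := hA
  have hne12 : ∀ e ∈ A, e.1 ≠ e.2 := fun e he => (hchord e he).1.ne
  set P : Finset (ZMod n) := A.image Prod.fst ∪ A.image Prod.snd with hPdef
  have hmem1 : ∀ e ∈ A, e.1 ∈ P := fun e he =>
    Finset.mem_union_left _ (Finset.mem_image_of_mem _ he)
  have hmem2 : ∀ e ∈ A, e.2 ∈ P := fun e he =>
    Finset.mem_union_right _ (Finset.mem_image_of_mem _ he)
  have hmemP : ∀ p ∈ P, ∃ e ∈ A, p = e.1 ∨ p = e.2 := by
    intro p hp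
    rw [hPdef, Finset.mem_union, Finset.mem_image, Finset.mem_image] at hp
    rcases hp with ⟨e, he, h⟩ | ⟨e, he, h⟩
    · exact ⟨e, he, Or.inl h.symm⟩
    · exact ⟨e, he, Or.inr h.symm⟩
  have share : ∀ e ∈ A, ∀ e' ∈ A, ∀ a : ZMod n,
      (a = e.1 ∨ a = e.2) → (a = e'.1 ∨ a = e'.2) → e = e' := by
    intro e he e' he' a h1 h2
    by_contra hne
    obtain ⟨c1, c2, c3, c4⟩ := hindep e he e' he' hne
    rcases h1 with rfl | rfl
    · rcases h2 with h | h
      · exact c1 h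
      · exact c2 h
    · rcases h2 with h | h
      · exact c3 h
      · exact c4 h
  have hinj1 : ∀ a ∈ A, ∀ b ∈ A, a.1 = b.1 → a = b := by
    intro a ha b hb h
    exact share a ha b hb a.1 (Or.inl rfl) (Or.inl h)
  have hinj2 : ∀ a ∈ A, ∀ b ∈ A, a.2 = b.2 → a = b := by
    intro a ha b hb h
    exact share a ha b hb a.2 (Or.inr rfl) (Or.inr h)
  have hdisj : Disjoint (A.image Prod.fst) (A.image Prod.snd) := by
    rw [Finset.disjoint_left]
    rintro a ha hb
    obtain ⟨e, he, rfl⟩ := Finset.mem_image.1 ha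
    obtain ⟨e', he', h⟩ := Finset.mem_image.1 hb
    have := share e he e' he' e.1 (Or.inl rfl) (Or.inr h.symm)
    subst this
    exact hne12 e he h.symm
  have hcardP : P.card = 2 * t := by
    rw [hPdef, Finset.card_union_of_disjoint hdisj,
      Finset.card_image_of_injOn hinj1, Finset.card_image_of_injOn hinj2, hcard]
    ring
  have hPcard2 : 2 ≤ P.card := by omega
  have hsumA : ∑ e ∈ A, (gapP P e.1 + gapP P e.2) = n := by
    have h1 : ∑ p ∈ P, gapP P p = n := sum_gapP hn0 hPcard2
    rw [hPdef, Finset.sum_union hdisj,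
      Finset.sum_image (fun a ha b hb => hinj1 a ha b hb),
      Finset.sum_image (fun a ha b hb => hinj2 a ha b hb)] at h1
    rw [Finset.sum_add_distrib]
    exact h1
  have hAne : A.Nonempty := Finset.card_pos.1 (by omega)
  have havg : ∃ e ∈ A, ((gapP P e.1 + gapP P e.2 : ℕ) : ℝ) ≤ (n : ℝ) / t := by
    by_contra hc
    push_neg at hc
    have h1 : ∑ e ∈ A, ((n : ℝ) / t) < ∑ e ∈ A, ((gapP P e.1 + gapP P e.2 : ℕ) : ℝ) :=
      Finset.sum_lt_sum_of_nonempty hAne hc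
    have h2 : ∑ e ∈ A, ((n : ℝ) / t) = (n : ℝ) := by
      rw [Finset.sum_const, hcard, nsmul_eq_mul]
      field_simp
    have h3 : ∑ e ∈ A, ((gapP P e.1 + gapP P e.2 : ℕ) : ℝ) = (n : ℝ) := by
      rw [← Nat.cast_sum, hsumA]
    rw [h2, h3] at h1
    exact lt_irrefl _ h1
  obtain ⟨em, hem, hbound⟩ := havg
  set u := em.1 with hu
  set v := em.2 with hv
  have huv : u ≠ v := hne12 em hem
  have huP : u ∈ P := hmem1 em hem
  have hvP : v ∈ P := hmem2 em hem
  have hneU : (P.erase u).Nonempty := ⟨v, Finset.mem_erase.2 ⟨huv.symm, hvP⟩⟩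
  have hneV : (P.erase v).Nonempty := ⟨u, Finset.mem_erase.2 ⟨huv, huP⟩⟩
  set x := succP P u with hxdef
  set y := succP P v with hydef
  have hxe : x ∈ P.erase u := succP_mem hn0 hneU
  have hye : y ∈ P.erase v := succP_mem hn0 hneV
  have hdux : dC u x = gapP P u := dC_succP hn0 hneU
  have hdvy : dC v y = gapP P v := dC_succP hn0 hneV
  -- another chord gives points strictly inside both arcs
  obtain ⟨e', he', hee'⟩ := Finset.exists_mem_ne (s := A) (by omega) em
  have hint := hinter em hem e' he' (fun h => hee' h.symm)
  have harc : (∃ a, a ∈ P ∧ CBtw u a v) ∧ (∃ b, b ∈ P ∧ CBtw v b u) := by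
    rcases hint with ⟨h1, h2⟩ | ⟨h1, h2⟩
    · exact ⟨⟨e'.1, hmem1 e' he', h1⟩, ⟨e'.2, hmem2 e' he', h2⟩⟩
    · exact ⟨⟨e'.2, hmem2 e' he', h1⟩, ⟨e'.1, hmem1 e' he', h2⟩⟩
  obtain ⟨⟨a0, ha0P, ha0⟩, ⟨b0, hb0P, hb0⟩⟩ := harc
  have ha0u : a0 ≠ u := by
    intro h; rw [h] at ha0; exact absurd ha0.1 (by rw [dC_self]; omega)
  have hb0v : b0 ≠ v := by
    intro h; rw [h] at hb0; exact absurd hb0.1 (by rw [dC_self]; omega)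
  have hCuxv : CBtw u x v := by
    constructor
    · rw [hdux]; exact gapP_pos hn0 hneU
    · have h1 : gapP P u ≤ dC u a0 := gapP_le (Finset.mem_erase.2 ⟨ha0u, ha0P⟩)
      rw [hdux]
      exact lt_of_le_of_lt h1 ha0.2
  have hCvyu : CBtw v y u := by
    constructor
    · rw [hdvy]; exact gapP_pos hn0 hneV
    · have h1 : gapP P v ≤ dC v b0 := gapP_le (Finset.mem_erase.2 ⟨hb0v, hb0P⟩)
      rw [hdvy]
      exact lt_of_le_of_lt h1 hb0.2
  have hxu : x ≠ u := Finset.ne_of_mem_erase hxe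
  have hxv : x ≠ v := by
    intro h
    have := hCuxv.2
    rw [h] at this
    exact lt_irrefl _ this
  have hyv : y ≠ v := Finset.ne_of_mem_erase hye
  have hyu : y ≠ u := by
    intro h
    have := hCvyu.2
    rw [h] at this
    exact lt_irrefl _ this
  have hxy : x ≠ y := by
    intro h
    exact not_both_arcs hn0 hCuxv (h ▸ hCvyu)
  -- the chord containing x
  obtain ⟨e2, he2, hx2⟩ := hmemP x (Finset.mem_of_mem_erase hxe)
  have he2em : e2 ≠ em := by
    intro h
    subst h
    rcases hx2 with h | h
    · exact hxu h
    · exact hxv h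
  obtain ⟨w, hsymw, hw2⟩ : ∃ w, s(x, w) = s(e2.1, e2.2) ∧ (w = e2.1 ∨ w = e2.2) := by
    rcases hx2 with h | h
    · exact ⟨e2.2, by rw [h], Or.inr rfl⟩
    · exact ⟨e2.1, by rw [h, Sym2.eq_swap], Or.inl rfl⟩
  have hwP : w ∈ P := by
    rcases hw2 with h | h
    · rw [h]; exact hmem1 e2 he2
    · rw [h]; exact hmem2 e2 he2
  -- the chord containing y
  obtain ⟨e3, he3, hy3⟩ := hmemP y (Finset.mem_of_mem_erase hye)
  have he3em : e3 ≠ em := by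
    intro h
    subst h
    rcases hy3 with h | h
    · exact hyu h
    · exact hyv h
  obtain ⟨w3, hsymw3, hw32⟩ : ∃ w3, s(y, w3) = s(e3.1, e3.2) ∧ (w3 = e3.1 ∨ w3 = e3.2) := by
    rcases hy3 with h | h
    · exact ⟨e3.2, by rw [h], Or.inr rfl⟩
    · exact ⟨e3.1, by rw [h, Sym2.eq_swap], Or.inl rfl⟩
  have hw3P : w3 ∈ P := by
    rcases hw32 with h | h
    · rw [h]; exact hmem1 e3 he3
    · rw [h]; exact hmem2 e3 he3
  -- w lies strictly inside arc (v, u)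
  have hCvwu : CBtw v w u := by
    have hI := hinter em hem e2 he2 (fun h => he2em h.symm)
    rw [← hu, ← hv] at hI
    rcases Sym2.eq_iff.1 hsymw with ⟨h1, h2⟩ | ⟨h1, h2⟩
    · rcases hI with ⟨hA1, hA2⟩ | ⟨hA1, hA2⟩
      · rw [← h2] at hA2; exact hA2
      · rw [← h1] at hA2; exact absurd hA2 (fun hc => not_both_arcs hn0 hCuxv hc)
    · rcases hI with ⟨hA1, hA2⟩ | ⟨hA1, hA2⟩
      · rw [← h1] at hA2; exact absurd hA2 (fun hc => not_both_arcs hn0 hCuxv hc)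
      · rw [← h2] at hA2; exact hA2
  -- w3 lies strictly inside arc (u, v)
  have hCuw3v : CBtw u w3 v := by
    have hI := hinter em hem e3 he3 (fun h => he3em h.symm)
    rw [← hu, ← hv] at hI
    rcases Sym2.eq_iff.1 hsymw3 with ⟨h1, h2⟩ | ⟨h1, h2⟩
    · rcases hI with ⟨hA1, hA2⟩ | ⟨hA1, hA2⟩
      · rw [← h1] at hA1; exact absurd hA1 (fun hc => not_both_arcs hn0 hc hCvyu)
      · rw [← h2] at hA1; exact hA1
    · rcases hI with ⟨hA1, hA2⟩ | ⟨hA1, hA2⟩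
      · rw [← h2] at hA1; exact hA1
      · rw [← h1] at hA1; exact absurd hA1 (fun hc => not_both_arcs hn0 hc hCvyu)
  rcases eq_or_ne e2 e3 with heq | hne23
  · -- success case: y is the other endpoint of e2
    subst heq
    have hyw : y = w := by
      have h := hsymw3.trans hsymw.symm
      rcases Sym2.eq_iff.1 h with ⟨h1, h2⟩ | ⟨h1, h2⟩
      · exact absurd h1 hxy.symm
      · exact h1
    refine ⟨em, hem, e2, he2, (fun h => he2em h.symm), u, v, x, y, rfl, ?_, hCuxv, hCvyu, ?_⟩
    · rw [hyw]; exact hsymw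
    · rw [hdux, hdvy]; exact hbound
  · -- contradiction case
    exfalso
    have hw3u : w3 ≠ u := by
      intro h; rw [h] at hCuw3v
      exact absurd hCuw3v.1 (by rw [dC_self]; omega)
    have hwv : w ≠ v := by
      intro h; rw [h] at hCvwu
      exact absurd hCvwu.1 (by rw [dC_self]; omega)
    have hminx : dC u x ≤ dC u w3 := by
      rw [hdux]; exact gapP_le (Finset.mem_erase.2 ⟨hw3u, hw3P⟩)
    have hminy : dC v y ≤ dC v w := by
      rw [hdvy]; exact gapP_le (Finset.mem_erase.2 ⟨hwv, hwP⟩)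
    have hxw3 : x ≠ w3 := fun h =>
      hne23 (share e2 he2 e3 he3 x hx2 (by rw [h]; exact hw32))
    have hyw : y ≠ w := fun h =>
      hne23 (share e2 he2 e3 he3 y (by rw [h]; exact hw2) hy3)
    have hI23 : Interlace x w y w3 := by
      have h := hinter e2 he2 e3 he3 hne23
      rcases Sym2.eq_iff.1 hsymw with ⟨h1, h2⟩ | ⟨h1, h2⟩ <;>
        rcases Sym2.eq_iff.1 hsymw3 with ⟨h3, h4⟩ | ⟨h3, h4⟩ <;>
        rw [← h1, ← h2, ← h3, ← h4] at h
      · exact h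
      · exact interlace_swap2 h
      · exact interlace_swap1 h
      · exact interlace_swap1 (interlace_swap2 h)
    -- position arithmetic
    have hb1 : dC u x < dC u w3 :=
      lt_of_le_of_ne hminx (fun h => hxw3 (dC_inj hn0 h))
    have hb2 : 0 < dC u v := lt_trans hCuxv.1 hCuxv.2
    have e_vu : (dC v u : ℤ) = (n : ℤ) - dC u v := by
      have h := dC_rel hn0 u v u
      rw [dC_self] at h
      rw [if_pos (by omega : 0 < dC u v)] at h
      omega
    have key : ∀ c : ZMod n, CBtw v c u →
        dC u v < dC u c ∧ (dC v c : ℤ) = (dC u c : ℤ) - dC u v := by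
      intro c hc
      have h := dC_rel hn0 u v c
      by_cases hcc : dC u c < dC u v
      · rw [if_pos hcc] at h
        have h2 := hc.2
        exfalso
        omega
      · rw [if_neg hcc] at h
        have h1 := hc.1
        exact ⟨by omega, by omega⟩
    have hky := key y hCvyu
    have hkw := key w hCvwu
    have hb3 : dC u y < dC u w := by
      have hle : dC u y ≤ dC u w := by
        have := hminy
        omega
      exact lt_of_le_of_ne hle (fun h => hyw (dC_inj hn0 h))
    have hbw3v : dC u w3 < dC u v := hCuw3v.2
    have ewx : (dC w x : ℤ) = (dC u x : ℤ) - dC u w + n := by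
      have h := dC_rel hn0 u w x
      rw [if_pos (by omega : dC u x < dC u w)] at h
      omega
    have ewy : (dC w y : ℤ) = (dC u y : ℤ) - dC u w + n := by
      have h := dC_rel hn0 u w y
      rw [if_pos hb3] at h
      omega
    have eww3 : (dC w w3 : ℤ) = (dC u w3 : ℤ) - dC u w + n := by
      have h := dC_rel hn0 u w w3
      rw [if_pos (by omega : dC u w3 < dC u w)] at h
      omega
    rcases hI23 with ⟨hq1, hq2⟩ | ⟨hq1, hq2⟩
    · have h := hq2.2
      omega
    · have h := hq2.2
      have hxy' : dC u x < dC u y := by omega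
      omega
end

section
/- Let G be a simple graph on n vertices with a designated Hamiltonian cycle C, and let u1v1 < u2v2 < ... < ukvk be a chain of independent chords in the poset P_S (for some set S of independent chords), with k ≥ 3 and u1 ≺ u2 ≺ ... ≺ uk ≺ vk ≺ v_{k−1} ≺ ... ≺ v1 around C. Then there exists an index 1 ≤ i ≤ ⌈k/2⌉ − 1 such that d_C(u_{2i−1}, u_{2i+1}) + d_C(v_{2i+1}, v_{2i−1}) ≤ n/(⌈k/2⌉ − 1). -/
/-- Given a chain `u1v1 < u2v2 < ... < ukvk` in the poset `P_S` (for a set `S` of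
independent chords), with `k ≥ 3` and
`u1 ≺ u2 ≺ ... ≺ uk ≺ vk ≺ v_{k-1} ≺ ... ≺ v1` around the cycle, there exists an index
`1 ≤ i ≤ ⌈k/2⌉ - 1` with
`d_C(u_{2i-1}, u_{2i+1}) + d_C(v_{2i+1}, v_{2i-1}) ≤ n/(⌈k/2⌉ - 1)`.
(The cyclic order of the `2k` endpoints is encoded by the strict monotonicity of their
positions `dC (u 1) ·` measured from `u 1`; note `⌈k/2⌉ = (k+1)/2` in `ℕ`.) -/
theorem tight_triple_in_chain
    (n : ℕ) (G : SimpleGraph (ZMod n)) (hn : 3 ≤ n)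
    (hC : ∀ i : ZMod n, G.Adj i (i + 1)) (f0 : ZMod n)
    (S : Finset (ZMod n × ZMod n)) (hS : IndepChords G S)
    (k : ℕ) (hk : 3 ≤ k) (u v : ℕ → ZMod n)
    (hmem : ∀ i, 1 ≤ i → i ≤ k → (u i, v i) ∈ S)
    (hchain : ∀ i j, 1 ≤ i → i < j → j ≤ k → PRel f0 (u i, v i) (u j, v j))
    (hordu : ∀ i j, 1 ≤ i → i < j → j ≤ k → dC (u 1) (u i) < dC (u 1) (u j))
    (hordv : ∀ i j, 1 ≤ i → i < j → j ≤ k → dC (u 1) (v j) < dC (u 1) (v i))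
    (horduv : dC (u 1) (u k) < dC (u 1) (v k)) :
    ∃ i, 1 ≤ i ∧ i ≤ (k + 1) / 2 - 1 ∧
      ((dC (u (2 * i - 1)) (u (2 * i + 1)) +
        dC (v (2 * i + 1)) (v (2 * i - 1)) : ℕ) : ℝ) ≤
        (n : ℝ) / (((k + 1) / 2 - 1 : ℕ) : ℝ) := by
  classical
  haveI : NeZero n := ⟨by omega⟩
  set m := (k + 1) / 2 - 1 with hm
  have hm1 : 1 ≤ m := by omega
  have h2m : 2 * m + 1 ≤ k := by omega
  set p : ZMod n → ℕ := fun x => dC (u 1) x with hp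
  have hsub : ∀ x y : ZMod n, p x ≤ p y → dC x y + p x = p y := by
    intro x y h
    have hxy : y - x = (y - u 1) - (x - u 1) := by ring
    have h2 : (y - x).val = (y - u 1).val - (x - u 1).val := by
      rw [hxy, ZMod.val_sub h]
    simp only [dC, p] at *
    omega
  have hu_le : ∀ a b, 1 ≤ a → a ≤ b → b ≤ k → p (u a) ≤ p (u b) := by
    intro a b ha hab hb
    rcases eq_or_lt_of_le hab with rfl | h
    · exact le_refl _
    · exact (hordu a b ha h hb).le
  have hv_le : ∀ a b, 1 ≤ a → a ≤ b → b ≤ k → p (v b) ≤ p (v a) := by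
    intro a b ha hab hb
    rcases eq_or_lt_of_le hab with rfl | h
    · exact le_refl _
    · exact (hordv a b ha h hb).le
  set t : ℕ → ℕ := fun i => dC (u (2 * i - 1)) (u (2 * i + 1)) +
      dC (v (2 * i + 1)) (v (2 * i - 1)) with ht
  have hterm : ∀ i, 1 ≤ i → i ≤ m →
      t i + p (u (2 * i - 1)) + p (v (2 * i + 1)) =
        p (u (2 * i + 1)) + p (v (2 * i - 1)) := by
    intro i hi him
    have h1 : p (u (2 * i - 1)) ≤ p (u (2 * i + 1)) :=
      hu_le _ _ (by omega) (by omega) (by omega)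
    have h2 : p (v (2 * i + 1)) ≤ p (v (2 * i - 1)) :=
      hv_le _ _ (by omega) (by omega) (by omega)
    have e1 := hsub _ _ h1
    have e2 := hsub _ _ h2
    simp only [ht]
    omega
  have hsum : ∀ M, 1 ≤ M → M ≤ m →
      (∑ i ∈ Finset.Icc 1 M, t i) + p (u 1) + p (v (2 * M + 1)) =
        p (u (2 * M + 1)) + p (v 1) := by
    intro M
    induction M with
    | zero => omega
    | succ M ih =>
      intro _ hMm
      rcases Nat.eq_or_lt_of_le (show 1 ≤ M + 1 by omega) with h1 | h1
      · have : M = 0 := by omega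
        subst this
        simpa using hterm 1 le_rfl (by omega)
      · have hM1 : 1 ≤ M := by omega
        have hsumM := ih hM1 (by omega)
        have hT := hterm (M + 1) (by omega) hMm
        rw [Finset.sum_Icc_succ_top (by omega : 1 ≤ M + 1)]
        have e1 : 2 * (M + 1) - 1 = 2 * M + 1 := by omega
        have e2 : 2 * (M + 1) + 1 = 2 * M + 3 := by omega
        rw [e1, e2] at hT
        rw [e2]
        omega
  have hpu1 : p (u 1) = 0 := by simp [hp, dC]
  have huv : p (u (2 * m + 1)) ≤ p (v (2 * m + 1)) := by
    calc p (u (2 * m + 1)) ≤ p (u k) := hu_le _ _ (by omega) h2m le_rfl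
    _ ≤ p (v k) := horduv.le
    _ ≤ p (v (2 * m + 1)) := hv_le _ _ (by omega) h2m le_rfl
  have hsm := hsum m hm1 le_rfl
  have hv1n : p (v 1) < n := ZMod.val_lt _
  have hsumlt : (∑ i ∈ Finset.Icc 1 m, t i) < n := by omega
  obtain ⟨i0, hi0mem, hi0min⟩ :=
    Finset.exists_min_image (Finset.Icc 1 m) t ⟨1, by simp [hm1]⟩
  simp only [Finset.mem_Icc] at hi0mem
  have hcard : (Finset.Icc 1 m).card = m := by simp
  have hmul : m * t i0 ≤ ∑ i ∈ Finset.Icc 1 m, t i := by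
    calc m * t i0 = ∑ _i ∈ Finset.Icc 1 m, t i0 := by
          rw [Finset.sum_const, hcard, smul_eq_mul]
    _ ≤ ∑ i ∈ Finset.Icc 1 m, t i :=
        Finset.sum_le_sum fun j hj => hi0min j hj
  refine ⟨i0, hi0mem.1, hi0mem.2, ?_⟩
  have hmpos : (0 : ℝ) < (m : ℝ) := by exact_mod_cast hm1
  rw [le_div_iff₀ hmpos]
  have : t i0 * m ≤ n := by
    have := hmul.trans hsumlt.le
    nlinarith
  calc ((dC (u (2 * i0 - 1)) (u (2 * i0 + 1)) + dC (v (2 * i0 + 1)) (v (2 * i0 - 1)) : ℕ) : ℝ) * m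
      = ((t i0 * m : ℕ) : ℝ) := by push_cast [ht]; ring
  _ ≤ (n : ℝ) := by exact_mod_cast this
end
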